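/- arXiv:2409.18928 — 6 statements merged into one kernel-verified Lean document; each statement's English description precedes it below -/
import Mathlib

section
/- Let f : ℝ^m × ℝ^n → ℝ be bi-convex, i.e., x ↦ f(x, y) is convex for every fixed y and y ↦ f(x, y) is convex for every fixed x. Let P ⊆ ℝ^m and Q ⊆ ℝ^n be convex sets, g : ℝ^m → ℝ affine on P, h : ℝ^n → ℝ affine on Q, and suppose G ⊆ P and H ⊆ Q satisfy P = conv(G) and Q = conv(H). If f(x, y) ≤ g(x)·h(y) holds for all (x, y) ∈ G × H, then f(x, y) ≤ g(x)·h(y) holds for all (x, y) ∈ P × Q. -/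
lemma aux_sublevel {d : ℕ} {φ : (Fin d → ℝ) → ℝ} (hφ : ConvexOn ℝ Set.univ φ)
    {G : Set (Fin d → ℝ)} (hG : ∀ x ∈ G, φ x ≤ 0) :
    ∀ x ∈ convexHull ℝ G, φ x ≤ 0 := by
  intro x hx
  have hconv : Convex ℝ {x | φ x ≤ 0} := by
    have := hφ.convex_le 0
    simpa using this
  exact convexHull_min (fun z hz => hG z hz) hconv hx

lemma aux_affine_concave {d : ℕ} (A : (Fin d → ℝ) →ᵃ[ℝ] ℝ) (c : ℝ) :
    ConvexOn ℝ Set.univ (fun x => -(A x * c)) := by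
  refine ⟨convex_univ, fun x _ y _ a b ha hb hab => ?_⟩
  show -(A (a • x + b • y) * c) ≤ _
  rw [Convex.combo_affine_apply hab]
  simp [smul_eq_mul]
  ring_nf
  linarith

theorem stmt_4 (m n : ℕ) (f : (Fin m → ℝ) → (Fin n → ℝ) → ℝ)
    (hfx : ∀ y, ConvexOn ℝ Set.univ fun x => f x y)
    (hfy : ∀ x, ConvexOn ℝ Set.univ fun y => f x y)
    (P : Set (Fin m → ℝ)) (Q : Set (Fin n → ℝ))
    (G : Set (Fin m → ℝ)) (H : Set (Fin n → ℝ))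
    (hPG : P = convexHull ℝ G) (hQH : Q = convexHull ℝ H)
    (g : (Fin m → ℝ) → ℝ) (h : (Fin n → ℝ) → ℝ)
    (hg : ∃ g' : (Fin m → ℝ) →ᵃ[ℝ] ℝ, ∀ x ∈ P, g x = g' x)
    (hh : ∃ h' : (Fin n → ℝ) →ᵃ[ℝ] ℝ, ∀ y ∈ Q, h y = h' y)
    (hGH : ∀ x ∈ G, ∀ y ∈ H, f x y ≤ g x * h y) :
    ∀ x ∈ P, ∀ y ∈ Q, f x y ≤ g x * h y := by
  obtain ⟨g', hg'⟩ := hg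
  obtain ⟨h', hh'⟩ := hh
  have hGP : G ⊆ P := hPG ▸ subset_convexHull ℝ G
  have hHQ : H ⊆ Q := hQH ▸ subset_convexHull ℝ H
  -- step 1: for y ∈ H, extend over x
  have step1 : ∀ y ∈ H, ∀ x ∈ P, f x y + -(g' x * h' y) ≤ 0 := by
    intro y hy
    rw [hPG]
    refine aux_sublevel ((hfx y).add (aux_affine_concave g' (h' y))) ?_
    intro x hx
    have := hGH x hx y hy
    rw [hg' x (hGP hx), hh' y (hHQ hy)] at this
    simp only [Pi.add_apply]
    linarith
  -- step 2: fix x ∈ P, extend over y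
  intro x hxP y hyQ
  have step2 : ∀ y ∈ Q, f x y + -(h' y * g' x) ≤ 0 := by
    rw [hQH]
    refine aux_sublevel ((hfy x).add (aux_affine_concave h' (g' x))) ?_
    intro y hy
    have := step1 y hy x hxP
    simp only [Pi.add_apply]
    linarith [mul_comm (h' y) (g' x)]
  have := step2 y hyQ
  rw [hg' x hxP, hh' y hyQ]
  linarith
end

section
/- Let z_1, ..., z_m be nonzero real numbers, let λ, λ', μ, μ' be reals, and let {1,...,m} be partitioned into four (possibly empty) sets T1, T2, T3, T4. Define a_i = z_i·(λ, μ, 1) for i ∈ T1, a_i = z_i·(λ, μ', 1) for i ∈ T2, a_i = z_i·(λ', μ, 1) for i ∈ T3, and a_i = z_i·(λ', μ', 1) for i ∈ T4. Then ∑_{1 ≤ i < j < k ≤ m} |det(a_i, a_j, a_k)| = |λ - λ'| · |μ - μ'| · (s2·s3·s4 + s1·s3·s4 + s1·s2·s4 + s1·s2·s3), where s_r = ∑_{i ∈ T_r} |z_i| for r = 1, 2, 3, 4. -/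
/-!
Every `a i` is `z i` times one of the four points `v p = (x, y, 1)`. The summand `|det|` is
symmetric in `i, j, k` and vanishes when two indices coincide, so the sum over `i < j < k` is a
sixth of the sum over all triples. Grouping the indices by block turns that full sum into
`∑ p q r, s p * s q * s r * |det (v p) (v q) (v r)|` with `s p = ∑ i ∈ T p, |z i|`, which by the
same symmetry is six times the sum over blocks `p < q < r`; each of those four determinants is
`±(λ - λ') (μ - μ')`.
-/

open Finset Function

theorem sum_sum_sum_eq_six_nsmul_sum_lt_lt {ι M : Type*} [Fintype ι] [LinearOrder ι]
    [AddCommMonoid M] (F : ι → ι → ι → M)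
    (h12 : ∀ i j k, F j i k = F i j k) (h23 : ∀ i j k, F i k j = F i j k)
    (hdiag : ∀ i k, F i i k = 0) :
    ∑ i, ∑ j, ∑ k, F i j k = 6 • ∑ i, ∑ j, ∑ k, if i < j ∧ j < k then F i j k else 0 := by
  set G : ι → ι → ι → M := fun i j k => if i < j ∧ j < k then F i j k else 0
  have hsplit : ∀ i j k,
      F i j k = G i j k + G i k j + G j i k + G j k i + G k i j + G k j i := by
    intro i j k
    have hdiag_right : ∀ i j, F i j j = 0 := fun i j => by rw [← h12, h23, hdiag]
    have hdiag_outer : ∀ i j, F i j i = 0 := fun i j => by rw [h23, hdiag]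
    obtain rfl | hij := eq_or_ne i j
    · simp [G, hdiag, hdiag_outer]
    obtain rfl | hjk := eq_or_ne j k
    · simp [G, hdiag_outer, hdiag_right]
    obtain rfl | hik := eq_or_ne i k
    · simp [G, hdiag_outer]
    -- exactly one of the six orderings of the distinct indices `i, j, k` is increasing
    rcases hij.lt_or_gt with h1 | h1 <;> rcases hjk.lt_or_gt with h2 | h2 <;>
      rcases hik.lt_or_gt with h3 | h3 <;>
      first
        | order
        | simp [G, h1, h2, h3, h1.not_gt, h2.not_gt, h3.not_gt, h12, h23]
  have swap12 : ∀ H : ι → ι → ι → M, ∑ i, ∑ j, ∑ k, H j i k = ∑ i, ∑ j, ∑ k, H i j k :=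
    fun H => sum_comm
  have swap23 : ∀ H : ι → ι → ι → M, ∑ i, ∑ j, ∑ k, H i k j = ∑ i, ∑ j, ∑ k, H i j k :=
    fun H => sum_congr rfl fun _ _ => sum_comm
  calc ∑ i, ∑ j, ∑ k, F i j k
      = ∑ i, ∑ j, ∑ k, (G i j k + G i k j + G j i k + G j k i + G k i j + G k j i) := by
        simp only [← hsplit]
    _ = 6 • ∑ i, ∑ j, ∑ k, G i j k := by
        simp only [sum_add_distrib]
        rw [swap23 G, swap12 G, (swap12 fun a b c => G a c b).trans (swap23 G),
          (swap23 fun a b c => G b a c).trans (swap12 G),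
          ((swap12 fun a b c => G c a b).trans (swap23 fun a b c => G b a c)).trans (swap12 G)]
        simp only [succ_nsmul, zero_nsmul, zero_add]

theorem sum_eq_sum_sum_of_partition {ι κ M : Type*} [Fintype ι] [Fintype κ] [AddCommMonoid M]
    {T : κ → Finset ι} (hT : Pairwise (Disjoint on T)) (hcov : ∀ i, ∃ p, i ∈ T p)
    (f : ι → M) : ∑ i, f i = ∑ p, ∑ i ∈ T p, f i := by
  classical
  rw [← sum_biUnion (hT.set_pairwise _)]
  congr 1
  ext i
  simpa using hcov i

theorem sum_sum_sum_eq_sum_sum_sum_of_partition {ι κ M : Type*} [Fintype ι] [Fintype κ]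
    [AddCommMonoid M] {T : κ → Finset ι} (hT : Pairwise (Disjoint on T))
    (hcov : ∀ i, ∃ p, i ∈ T p) (f : ι → ι → ι → M) :
    ∑ i, ∑ j, ∑ k, f i j k = ∑ p, ∑ q, ∑ r, ∑ i ∈ T p, ∑ j ∈ T q, ∑ k ∈ T r, f i j k := by
  simp only [sum_eq_sum_sum_of_partition hT hcov, sum_comm (s := T _) (t := univ)]

section det3

variable {R : Type*} [CommRing R]

def det3 (u v w : Fin 3 → R) : R :=
  !![u 0, v 0, w 0; u 1, v 1, w 1; u 2, v 2, w 2].det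

theorem det3_swap_left (u v w : Fin 3 → R) : det3 v u w = -det3 u v w := by
  simp [det3, Matrix.det_fin_three]; ring

theorem det3_swap_right (u v w : Fin 3 → R) : det3 u w v = -det3 u v w := by
  simp [det3, Matrix.det_fin_three]; ring

theorem det3_self_left (u w : Fin 3 → R) : det3 u u w = 0 := by
  simp [det3, Matrix.det_fin_three]

theorem det3_smul (a b c : R) (u v w : Fin 3 → R) :
    det3 (a • u) (b • v) (c • w) = a * b * c * det3 u v w := by
  simp [det3, Matrix.det_fin_three]; ring

theorem det3_affine (x y x' y' x'' y'' : R) :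
    det3 ![x, y, 1] ![x', y', 1] ![x'', y'', 1] = (x' - x) * (y'' - y) - (x'' - x) * (y' - y) := by
  simp [det3, Matrix.det_fin_three]; ring

end det3

theorem abs_det3_swap_left (u v w : Fin 3 → ℝ) : |det3 v u w| = |det3 u v w| := by
  rw [det3_swap_left, abs_neg]

theorem abs_det3_swap_right (u v w : Fin 3 → ℝ) : |det3 u w v| = |det3 u v w| := by
  rw [det3_swap_right, abs_neg]

theorem sum_abs_det3_eq_of_partition {ι κ : Type*} [Fintype ι] [Fintype κ]
    {T : κ → Finset ι} (hT : Pairwise (Disjoint on T)) (hcov : ∀ i, ∃ p, i ∈ T p)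
    (z : ι → ℝ) (v : κ → Fin 3 → ℝ) (a : ι → Fin 3 → ℝ)
    (ha : ∀ p, ∀ i ∈ T p, a i = z i • v p) :
    ∑ i, ∑ j, ∑ k, |det3 (a i) (a j) (a k)| =
      ∑ p, ∑ q, ∑ r, (∑ i ∈ T p, |z i|) * (∑ j ∈ T q, |z j|) * (∑ k ∈ T r, |z k|) *
        |det3 (v p) (v q) (v r)| := by
  rw [sum_sum_sum_eq_sum_sum_sum_of_partition hT hcov]
  refine sum_congr rfl fun p _ => sum_congr rfl fun q _ => sum_congr rfl fun r _ => ?_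
  calc ∑ i ∈ T p, ∑ j ∈ T q, ∑ k ∈ T r, |det3 (a i) (a j) (a k)|
      = ∑ i ∈ T p, ∑ j ∈ T q, ∑ k ∈ T r, |z i| * |z j| * |z k| * |det3 (v p) (v q) (v r)| :=
        sum_congr rfl fun i hi => sum_congr rfl fun j hj => sum_congr rfl fun k hk => by
          rw [ha p i hi, ha q j hj, ha r k hk, det3_smul, abs_mul, abs_mul, abs_mul]
    _ = _ := by simp only [← mul_sum, ← sum_mul]

theorem sum_lt_lt_abs_det3_eq_of_partition {ι κ : Type*} [Fintype ι] [LinearOrder ι]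
    [Fintype κ] [LinearOrder κ] {T : κ → Finset ι} (hT : Pairwise (Disjoint on T))
    (hcov : ∀ i, ∃ p, i ∈ T p) (z : ι → ℝ) (v : κ → Fin 3 → ℝ) (a : ι → Fin 3 → ℝ)
    (ha : ∀ p, ∀ i ∈ T p, a i = z i • v p) :
    ∑ i, ∑ j, ∑ k, (if i < j ∧ j < k then |det3 (a i) (a j) (a k)| else 0) =
      ∑ p, ∑ q, ∑ r, if p < q ∧ q < r then
        (∑ i ∈ T p, |z i|) * (∑ j ∈ T q, |z j|) * (∑ k ∈ T r, |z k|) *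
          |det3 (v p) (v q) (v r)| else 0 := by
  refine nsmul_right_injective (by norm_num : 6 ≠ 0) ?_
  dsimp only
  calc 6 • _ = ∑ i, ∑ j, ∑ k, |det3 (a i) (a j) (a k)| :=
        (sum_sum_sum_eq_six_nsmul_sum_lt_lt (fun i j k => |det3 (a i) (a j) (a k)|)
          (fun _ _ _ => abs_det3_swap_left ..)
          (fun _ _ _ => abs_det3_swap_right ..)
          (fun _ _ => by rw [det3_self_left, abs_zero])).symm
    _ = _ := sum_abs_det3_eq_of_partition hT hcov z v a ha
    _ = 6 • _ :=
        sum_sum_sum_eq_six_nsmul_sum_lt_lt (fun p q r => (∑ i ∈ T p, |z i|) *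
            (∑ j ∈ T q, |z j|) * (∑ k ∈ T r, |z k|) * |det3 (v p) (v q) (v r)|)
          (fun _ _ _ => by rw [abs_det3_swap_left]; ring)
          (fun _ _ _ => by rw [abs_det3_swap_right]; ring)
          (fun _ _ => by rw [det3_self_left, abs_zero, mul_zero])

theorem stmt_6_general (m : ℕ) (z : Fin m → ℝ) (lam lam' mu mu' : ℝ)
    (T1 T2 T3 T4 : Finset (Fin m))
    (h12 : Disjoint T1 T2) (h13 : Disjoint T1 T3) (h14 : Disjoint T1 T4)
    (h23 : Disjoint T2 T3) (h24 : Disjoint T2 T4) (h34 : Disjoint T3 T4)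
    (hcover : T1 ∪ T2 ∪ T3 ∪ T4 = Finset.univ)
    (a : Fin m → Fin 3 → ℝ)
    (ha1 : ∀ i ∈ T1, a i = z i • ![lam, mu, 1])
    (ha2 : ∀ i ∈ T2, a i = z i • ![lam, mu', 1])
    (ha3 : ∀ i ∈ T3, a i = z i • ![lam', mu, 1])
    (ha4 : ∀ i ∈ T4, a i = z i • ![lam', mu', 1]) :
    (∑ i : Fin m, ∑ j : Fin m, ∑ k : Fin m,
        if i < j ∧ j < k then
          |Matrix.det !![a i 0, a j 0, a k 0; a i 1, a j 1, a k 1; a i 2, a j 2, a k 2]|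
        else 0)
      = |lam - lam'| * |mu - mu'| *
        ((∑ i ∈ T2, |z i|) * (∑ i ∈ T3, |z i|) * (∑ i ∈ T4, |z i|)
          + (∑ i ∈ T1, |z i|) * (∑ i ∈ T3, |z i|) * (∑ i ∈ T4, |z i|)
          + (∑ i ∈ T1, |z i|) * (∑ i ∈ T2, |z i|) * (∑ i ∈ T4, |z i|)
          + (∑ i ∈ T1, |z i|) * (∑ i ∈ T2, |z i|) * (∑ i ∈ T3, |z i|)) := by
  set T : Fin 4 → Finset (Fin m) := ![T1, T2, T3, T4]
  set v : Fin 4 → Fin 3 → ℝ := ![![lam, mu, 1], ![lam, mu', 1], ![lam', mu, 1], ![lam', mu', 1]]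
  have hT : Pairwise (Disjoint on T) := by
    intro p q hpq
    fin_cases p <;> fin_cases q <;> simp [T, onFun] at hpq ⊢ <;>
      first | assumption | exact Disjoint.symm ‹_›
  have hcov : ∀ i, ∃ p, i ∈ T p := fun i => by
    have hi : i ∈ T1 ∪ T2 ∪ T3 ∪ T4 := hcover ▸ mem_univ i
    simpa [T, Fin.exists_fin_succ, or_assoc] using hi
  have ha : ∀ p, ∀ i ∈ T p, a i = z i • v p := by
    intro p
    fin_cases p
    exacts [ha1, ha2, ha3, ha4]
  change ∑ i, ∑ j, ∑ k, (if i < j ∧ j < k then |det3 (a i) (a j) (a k)| else 0) = _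
  rw [sum_lt_lt_abs_det3_eq_of_partition hT hcov z v a ha]
  simp only [Fin.sum_univ_four, Fin.isValue, not_lt_zero, and_false, ↓reduceIte, Fin.lt_one_iff,
    Nat.reduceAdd, Matrix.cons_val_one, Matrix.cons_val_zero, zero_add, Matrix.cons_val, and_true,
    Fin.reduceLT, add_zero, one_ne_zero, Fin.reduceEq, lt_self_iff_false, det3_affine, sub_self,
    mul_zero, zero_sub, abs_neg, abs_mul, abs_sub_comm, zero_mul, sub_zero, T, v]
  ring

theorem stmt_6 (m : ℕ) (z : Fin m → ℝ) (hz : ∀ i, z i ≠ 0) (lam lam' mu mu' : ℝ)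
    (T1 T2 T3 T4 : Finset (Fin m))
    (h12 : Disjoint T1 T2) (h13 : Disjoint T1 T3) (h14 : Disjoint T1 T4)
    (h23 : Disjoint T2 T3) (h24 : Disjoint T2 T4) (h34 : Disjoint T3 T4)
    (hcover : T1 ∪ T2 ∪ T3 ∪ T4 = Finset.univ)
    (a : Fin m → Fin 3 → ℝ)
    (ha1 : ∀ i ∈ T1, a i = z i • ![lam, mu, 1])
    (ha2 : ∀ i ∈ T2, a i = z i • ![lam, mu', 1])
    (ha3 : ∀ i ∈ T3, a i = z i • ![lam', mu, 1])
    (ha4 : ∀ i ∈ T4, a i = z i • ![lam', mu', 1]) :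
    (∑ i : Fin m, ∑ j : Fin m, ∑ k : Fin m,
        if i < j ∧ j < k then
          |Matrix.det !![a i 0, a j 0, a k 0; a i 1, a j 1, a k 1; a i 2, a j 2, a k 2]|
        else 0)
      = |lam - lam'| * |mu - mu'| *
        ((∑ i ∈ T2, |z i|) * (∑ i ∈ T3, |z i|) * (∑ i ∈ T4, |z i|)
          + (∑ i ∈ T1, |z i|) * (∑ i ∈ T3, |z i|) * (∑ i ∈ T4, |z i|)
          + (∑ i ∈ T1, |z i|) * (∑ i ∈ T2, |z i|) * (∑ i ∈ T4, |z i|)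
          + (∑ i ∈ T1, |z i|) * (∑ i ∈ T2, |z i|) * (∑ i ∈ T3, |z i|)) :=
  stmt_6_general m z lam lam' mu mu' T1 T2 T3 T4 h12 h13 h14 h23 h24 h34 hcover a ha1 ha2 ha3 ha4
end

section
/- For any 4 vectors (x_i, y_i, z_i), i = 1, 2, 3, 4, in ℝ³, one has (∑_{1 ≤ i < j < k ≤ 4} |det[[x_i, x_j, x_k], [y_i, y_j, y_k], [z_i, z_j, z_k]]|) · (|z_1| + |z_2| + |z_3| + |z_4|) ≤ (∑_{1 ≤ i < j ≤ 4} |y_i z_j - y_j z_i|) · (∑_{1 ≤ i < j ≤ 4} |x_i z_j - x_j z_i|). -/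
private lemma triabs (a b : ℝ) : |a - b| ≤ |a| + |b| := by
  calc |a - b| = |a + -b| := by ring_nf
  _ ≤ |a| + |-b| := abs_add_le a (-b)
  _ = |a| + |b| := by rw [abs_neg]

private lemma keyf (X Y d e : ℝ) (h : X * Y = d * e) :
    2 * |X - Y| ≤ |X| + |Y| + |d| + |e| + |X + Y| := by
  have h1 : |X - Y| ≤ |X| + |Y| := triabs X Y
  have hde : |d| * |e| = |X| * |Y| := by rw [← abs_mul, ← abs_mul, h]
  have hxy : -(X * Y) ≤ |X| * |Y| := by rw [← abs_mul]; exact neg_le_abs _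
  have h2 : |X - Y| ≤ |X + Y| + |d| + |e| := by
    nlinarith [sq_abs (X - Y), sq_abs (X + Y), abs_nonneg (X - Y), abs_nonneg (X + Y),
      abs_nonneg d, abs_nonneg e, sq_nonneg (|d| - |e|), sq_nonneg (|X - Y| - (|X + Y| + |d| + |e|)),
      mul_nonneg (abs_nonneg (X + Y)) (add_nonneg (abs_nonneg d) (abs_nonneg e))]
  linarith

private lemma lin (t1 t2 t3 S1 S2 S3 f1 f2 f3 : ℝ)
    (ha1 : |t1| ≤ f1) (ha2 : |t2| ≤ f2) (ha3 : |t3| ≤ f3)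
    (hb1 : S1 ≤ f1) (hb2 : S2 ≤ f2) (hb3 : S3 ≤ f3)
    (hc1 : 2 * |t1| ≤ f1 + S1) (hc2 : 2 * |t2| ≤ f2 + S2) (hc3 : 2 * |t3| ≤ f3 + S3)
    (hs1 : S1 ≤ S2 + S3) (hs2 : S2 ≤ S1 + S3) (hs3 : S3 ≤ S1 + S2) :
    |t1 + t2 + t3| + |t1 + t2 - t3| + |t1 - t2 + t3| + |t1 - t2 - t3| ≤ 2 * (f1 + f2 + f3) := by
  have p1 := le_abs_self t1; have p2 := le_abs_self t2; have p3 := le_abs_self t3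
  have m1 := neg_abs_le t1; have m2 := neg_abs_le t2; have m3 := neg_abs_le t3
  rcases abs_cases (t1 + t2 + t3) with ⟨e1, _⟩ | ⟨e1, _⟩ <;>
    rcases abs_cases (t1 + t2 - t3) with ⟨e2, _⟩ | ⟨e2, _⟩ <;>
      rcases abs_cases (t1 - t2 + t3) with ⟨e3, _⟩ | ⟨e3, _⟩ <;>
        rcases abs_cases (t1 - t2 - t3) with ⟨e4, _⟩ | ⟨e4, _⟩ <;>
          rw [e1, e2, e3, e4] <;> linarith

private lemma core (x0 x1 x2 x3 y0 y1 y2 y3 z0 z1 z2 z3 A01 A02 A03 A12 A13 A23 B01 B02 B03 B12 B13 B23 D012 D013 D023 D123 : ℝ)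
    (hA01 : A01 = y0 * z1 - y1 * z0)
    (hA02 : A02 = y0 * z2 - y2 * z0)
    (hA03 : A03 = y0 * z3 - y3 * z0)
    (hA12 : A12 = y1 * z2 - y2 * z1)
    (hA13 : A13 = y1 * z3 - y3 * z1)
    (hA23 : A23 = y2 * z3 - y3 * z2)
    (hB01 : B01 = x0 * z1 - x1 * z0)
    (hB02 : B02 = x0 * z2 - x2 * z0)
    (hB03 : B03 = x0 * z3 - x3 * z0)
    (hB12 : B12 = x1 * z2 - x2 * z1)
    (hB13 : B13 = x1 * z3 - x3 * z1)
    (hB23 : B23 = x2 * z3 - x3 * z2)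
    (hD012 : D012 = x0 * (y1 * z2 - y2 * z1) - x1 * (y0 * z2 - y2 * z0) + x2 * (y0 * z1 - y1 * z0))
    (hD013 : D013 = x0 * (y1 * z3 - y3 * z1) - x1 * (y0 * z3 - y3 * z0) + x3 * (y0 * z1 - y1 * z0))
    (hD023 : D023 = x0 * (y2 * z3 - y3 * z2) - x2 * (y0 * z3 - y3 * z0) + x3 * (y0 * z2 - y2 * z0))
    (hD123 : D123 = x1 * (y2 * z3 - y3 * z2) - x2 * (y1 * z3 - y3 * z1) + x3 * (y1 * z2 - y2 * z1))
    : (|D012| + |D013| + |D023| + |D123|) * (|z0| + |z1| + |z2| + |z3|) ≤ (|A01| + |A02| + |A03| + |A12| + |A13| + |A23|) * (|B01| + |B02| + |B03| + |B12| + |B13| + |B23|) := by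
  have eL : (|D012| + |D013| + |D023| + |D123|) * (|z0| + |z1| + |z2| + |z3|) = |D012 * z0| + |D012 * z1| + |D012 * z2| + |D012 * z3| + |D013 * z0| + |D013 * z1| + |D013 * z2| + |D013 * z3| + |D023 * z0| + |D023 * z1| + |D023 * z2| + |D023 * z3| + |D123 * z0| + |D123 * z1| + |D123 * z2| + |D123 * z3| := by
    simp only [abs_mul]; ring
  have eR : (|A01| + |A02| + |A03| + |A12| + |A13| + |A23|) * (|B01| + |B02| + |B03| + |B12| + |B13| + |B23|) = |A01 * B01| + |A01 * B02| + |A01 * B03| + |A01 * B12| + |A01 * B13| + |A01 * B23| + |A02 * B01| + |A02 * B02| + |A02 * B03| + |A02 * B12| + |A02 * B13| + |A02 * B23| + |A03 * B01| + |A03 * B02| + |A03 * B03| + |A03 * B12| + |A03 * B13| + |A03 * B23| + |A12 * B01| + |A12 * B02| + |A12 * B03| + |A12 * B12| + |A12 * B13| + |A12 * B23| + |A13 * B01| + |A13 * B02| + |A13 * B03| + |A13 * B12| + |A13 * B13| + |A13 * B23| + |A23 * B01| + |A23 * B02| + |A23 * B03| + |A23 * B12| + |A23 * B13| + |A23 *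 B23| := by
    simp only [abs_mul]; ring
  have tw0 : |D012 * z0| ≤ |A02 * B01| + |A01 * B02| := by
    rw [show D012 * z0 = A02 * B01 - A01 * B02 by simp only [hA01, hA02, hA03, hA12, hA13, hA23, hB01, hB02, hB03, hB12, hB13, hB23, hD012, hD013, hD023, hD123]; ring]
    exact triabs _ _
  have tw1 : |D012 * z1| ≤ |A12 * B01| + |A01 * B12| := by
    rw [show D012 * z1 = A12 * B01 - A01 * B12 by simp only [hA01, hA02, hA03, hA12, hA13, hA23, hB01, hB02, hB03, hB12, hB13, hB23, hD012, hD013, hD023, hD123]; ring]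
    exact triabs _ _
  have tw2 : |D012 * z2| ≤ |A12 * B02| + |A02 * B12| := by
    rw [show D012 * z2 = A12 * B02 - A02 * B12 by simp only [hA01, hA02, hA03, hA12, hA13, hA23, hB01, hB02, hB03, hB12, hB13, hB23, hD012, hD013, hD023, hD123]; ring]
    exact triabs _ _
  have tw3 : |D013 * z0| ≤ |A03 * B01| + |A01 * B03| := by
    rw [show D013 * z0 = A03 * B01 - A01 * B03 by simp only [hA01, hA02, hA03, hA12, hA13, hA23, hB01, hB02, hB03, hB12, hB13, hB23, hD012, hD013, hD023, hD123]; ring]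
    exact triabs _ _
  have tw4 : |D013 * z1| ≤ |A13 * B01| + |A01 * B13| := by
    rw [show D013 * z1 = A13 * B01 - A01 * B13 by simp only [hA01, hA02, hA03, hA12, hA13, hA23, hB01, hB02, hB03, hB12, hB13, hB23, hD012, hD013, hD023, hD123]; ring]
    exact triabs _ _
  have tw5 : |D013 * z3| ≤ |A13 * B03| + |A03 * B13| := by
    rw [show D013 * z3 = A13 * B03 - A03 * B13 by simp only [hA01, hA02, hA03, hA12, hA13, hA23, hB01, hB02, hB03, hB12, hB13, hB23, hD012, hD013, hD023, hD123]; ring]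
    exact triabs _ _
  have tw6 : |D023 * z0| ≤ |A03 * B02| + |A02 * B03| := by
    rw [show D023 * z0 = A03 * B02 - A02 * B03 by simp only [hA01, hA02, hA03, hA12, hA13, hA23, hB01, hB02, hB03, hB12, hB13, hB23, hD012, hD013, hD023, hD123]; ring]
    exact triabs _ _
  have tw7 : |D023 * z2| ≤ |A23 * B02| + |A02 * B23| := by
    rw [show D023 * z2 = A23 * B02 - A02 * B23 by simp only [hA01, hA02, hA03, hA12, hA13, hA23, hB01, hB02, hB03, hB12, hB13, hB23, hD012, hD013, hD023, hD123]; ring]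
    exact triabs _ _
  have tw8 : |D023 * z3| ≤ |A23 * B03| + |A03 * B23| := by
    rw [show D023 * z3 = A23 * B03 - A03 * B23 by simp only [hA01, hA02, hA03, hA12, hA13, hA23, hB01, hB02, hB03, hB12, hB13, hB23, hD012, hD013, hD023, hD123]; ring]
    exact triabs _ _
  have tw9 : |D123 * z1| ≤ |A13 * B12| + |A12 * B13| := by
    rw [show D123 * z1 = A13 * B12 - A12 * B13 by simp only [hA01, hA02, hA03, hA12, hA13, hA23, hB01, hB02, hB03, hB12, hB13, hB23, hD012, hD013, hD023, hD123]; ring]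
    exact triabs _ _
  have tw10 : |D123 * z2| ≤ |A23 * B12| + |A12 * B23| := by
    rw [show D123 * z2 = A23 * B12 - A12 * B23 by simp only [hA01, hA02, hA03, hA12, hA13, hA23, hB01, hB02, hB03, hB12, hB13, hB23, hD012, hD013, hD023, hD123]; ring]
    exact triabs _ _
  have tw11 : |D123 * z3| ≤ |A23 * B13| + |A13 * B23| := by
    rw [show D123 * z3 = A23 * B13 - A13 * B23 by simp only [hA01, hA02, hA03, hA12, hA13, hA23, hB01, hB02, hB03, hB12, hB13, hB23, hD012, hD013, hD023, hD123]; ring]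
    exact triabs _ _
  have ha1 : |A01 * B23 - A23 * B01| ≤ |A01 * B23| + |A23 * B01| + |A01 * B01| + |A23 * B23| := by
    have := triabs (A01 * B23) (A23 * B01)
    have := abs_nonneg (A01 * B01); have := abs_nonneg (A23 * B23); linarith
  have ha2 : |A13 * B02 - A02 * B13| ≤ |A13 * B02| + |A02 * B13| + |A02 * B02| + |A13 * B13| := by
    have := triabs (A13 * B02) (A02 * B13)
    have := abs_nonneg (A02 * B02); have := abs_nonneg (A13 * B13); linarith
  have ha3 : |A03 * B12 - A12 * B03| ≤ |A03 * B12| + |A12 * B03| + |A03 * B03| + |A12 * B12| := by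
    have := triabs (A03 * B12) (A12 * B03)
    have := abs_nonneg (A03 * B03); have := abs_nonneg (A12 * B12); linarith
  have hb1 : |A01 * B23 + A23 * B01| ≤ |A01 * B23| + |A23 * B01| + |A01 * B01| + |A23 * B23| := by
    have := abs_add_le (A01 * B23) (A23 * B01)
    have := abs_nonneg (A01 * B01); have := abs_nonneg (A23 * B23); linarith
  have hb2 : |A13 * B02 + A02 * B13| ≤ |A13 * B02| + |A02 * B13| + |A02 * B02| + |A13 * B13| := by
    have := abs_add_le (A13 * B02) (A02 * B13)
    have := abs_nonneg (A02 * B02); have := abs_nonneg (A13 * B13); linarith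
  have hb3 : |A03 * B12 + A12 * B03| ≤ |A03 * B12| + |A12 * B03| + |A03 * B03| + |A12 * B12| := by
    have := abs_add_le (A03 * B12) (A12 * B03)
    have := abs_nonneg (A03 * B03); have := abs_nonneg (A12 * B12); linarith
  have hc1 : 2 * |A01 * B23 - A23 * B01| ≤ (|A01 * B23| + |A23 * B01| + |A01 * B01| + |A23 * B23|) + |A01 * B23 + A23 * B01| := by
    have := keyf (A01 * B23) (A23 * B01) (A01 * B01) (A23 * B23) (by ring); linarith
  have hc2 : 2 * |A13 * B02 - A02 * B13| ≤ (|A13 * B02| + |A02 * B13| + |A02 * B02| + |A13 * B13|) + |A13 * B02 + A02 * B13| := by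
    have := keyf (A13 * B02) (A02 * B13) (A02 * B02) (A13 * B13) (by ring); linarith
  have hc3 : 2 * |A03 * B12 - A12 * B03| ≤ (|A03 * B12| + |A12 * B03| + |A03 * B03| + |A12 * B12|) + |A03 * B12 + A12 * B03| := by
    have := keyf (A03 * B12) (A12 * B03) (A03 * B03) (A12 * B12) (by ring); linarith
  have hs1 : |A01 * B23 + A23 * B01| ≤ |A13 * B02 + A02 * B13| + |A03 * B12 + A12 * B03| := by
    rw [show A01 * B23 + A23 * B01 = (A13 * B02 + A02 * B13) - (A03 * B12 + A12 * B03) by simp only [hA01, hA02, hA03, hA12, hA13, hA23, hB01, hB02, hB03, hB12, hB13, hB23, hD012, hD013, hD023, hD123]; ring]; exact triabs _ _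
  have hs2 : |A13 * B02 + A02 * B13| ≤ |A01 * B23 + A23 * B01| + |A03 * B12 + A12 * B03| := by
    rw [show A13 * B02 + A02 * B13 = (A01 * B23 + A23 * B01) + (A03 * B12 + A12 * B03) by simp only [hA01, hA02, hA03, hA12, hA13, hA23, hB01, hB02, hB03, hB12, hB13, hB23, hD012, hD013, hD023, hD123]; ring]; exact abs_add_le _ _
  have hs3 : |A03 * B12 + A12 * B03| ≤ |A01 * B23 + A23 * B01| + |A13 * B02 + A02 * B13| := by
    rw [show A03 * B12 + A12 * B03 = (A13 * B02 + A02 * B13) - (A01 * B23 + A23 * B01) by simp only [hA01, hA02, hA03, hA12, hA13, hA23, hB01, hB02, hB03, hB12, hB13, hB23, hD012, hD013, hD023, hD123]; ring]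
    have := triabs (A13 * B02 + A02 * B13) (A01 * B23 + A23 * B01); linarith
  have L := lin (A01 * B23 - A23 * B01) (A13 * B02 - A02 * B13) (A03 * B12 - A12 * B03) (|A01 * B23 + A23 * B01|) (|A13 * B02 + A02 * B13|) (|A03 * B12 + A12 * B03|)
      (|A01 * B23| + |A23 * B01| + |A01 * B01| + |A23 * B23|) (|A13 * B02| + |A02 * B13| + |A02 * B02| + |A13 * B13|) (|A03 * B12| + |A12 * B03| + |A03 * B03| + |A12 * B12|) ha1 ha2 ha3 hb1 hb2 hb3 hc1 hc2 hc3 hs1 hs2 hs3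
  have J1 : |(A01 * B23 - A23 * B01) + (A13 * B02 - A02 * B13) + (A03 * B12 - A12 * B03)| = 2 * |D123 * z0| := by
    rw [show (A01 * B23 - A23 * B01) + (A13 * B02 - A02 * B13) + (A03 * B12 - A12 * B03) = 2 * (D123 * z0) by simp only [hA01, hA02, hA03, hA12, hA13, hA23, hB01, hB02, hB03, hB12, hB13, hB23, hD012, hD013, hD023, hD123]; ring, abs_mul]
    norm_num
  have J2 : |(A01 * B23 - A23 * B01) + (A13 * B02 - A02 * B13) - (A03 * B12 - A12 * B03)| = 2 * |D012 * z3| := by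
    rw [show (A01 * B23 - A23 * B01) + (A13 * B02 - A02 * B13) - (A03 * B12 - A12 * B03) = 2 * (D012 * z3) by simp only [hA01, hA02, hA03, hA12, hA13, hA23, hB01, hB02, hB03, hB12, hB13, hB23, hD012, hD013, hD023, hD123]; ring, abs_mul]
    norm_num
  have J3 : |(A01 * B23 - A23 * B01) - (A13 * B02 - A02 * B13) + (A03 * B12 - A12 * B03)| = 2 * |D013 * z2| := by
    rw [show (A01 * B23 - A23 * B01) - (A13 * B02 - A02 * B13) + (A03 * B12 - A12 * B03) = -(2 * (D013 * z2)) by simp only [hA01, hA02, hA03, hA12, hA13, hA23, hB01, hB02, hB03, hB12, hB13, hB23, hD012, hD013, hD023, hD123]; ring, abs_neg, abs_mul]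
    norm_num
  have J4 : |(A01 * B23 - A23 * B01) - (A13 * B02 - A02 * B13) - (A03 * B12 - A12 * B03)| = 2 * |D023 * z1| := by
    rw [show (A01 * B23 - A23 * B01) - (A13 * B02 - A02 * B13) - (A03 * B12 - A12 * B03) = -(2 * (D023 * z1)) by simp only [hA01, hA02, hA03, hA12, hA13, hA23, hB01, hB02, hB03, hB12, hB13, hB23, hD012, hD013, hD023, hD123]; ring, abs_neg, abs_mul]
    norm_num
  linarith [eL, eR, L, J1, J2, J3, J4, tw0, tw1, tw2, tw3, tw4, tw5, tw6, tw7, tw8, tw9, tw10, tw11]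

theorem stmt_7 (x y z : Fin 4 → ℝ) :
    (∑ i : Fin 4, ∑ j : Fin 4, ∑ k : Fin 4,
        if i < j ∧ j < k then
          |Matrix.det !![x i, x j, x k; y i, y j, y k; z i, z j, z k]| else 0)
      * (|z 0| + |z 1| + |z 2| + |z 3|)
    ≤ (∑ i : Fin 4, ∑ j : Fin 4, if i < j then |y i * z j - y j * z i| else 0)
      * (∑ i : Fin 4, ∑ j : Fin 4, if i < j then |x i * z j - x j * z i| else 0) := by
  have e1 : (∑ i : Fin 4, ∑ j : Fin 4, ∑ k : Fin 4,
        if i < j ∧ j < k then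
          |Matrix.det !![x i, x j, x k; y i, y j, y k; z i, z j, z k]| else 0)
      = |x 0 * (y 1 * z 2 - y 2 * z 1) - x 1 * (y 0 * z 2 - y 2 * z 0) + x 2 * (y 0 * z 1 - y 1 * z 0)| + |x 0 * (y 1 * z 3 - y 3 * z 1) - x 1 * (y 0 * z 3 - y 3 * z 0) + x 3 * (y 0 * z 1 - y 1 * z 0)| + |x 0 * (y 2 * z 3 - y 3 * z 2) - x 2 * (y 0 * z 3 - y 3 * z 0) + x 3 * (y 0 * z 2 - y 2 * z 0)| + |x 1 * (y 2 * z 3 - y 3 * z 2) - x 2 * (y 1 * z 3 - y 3 * z 1) + x 3 * (y 1 * z 2 - y 2 * z 1)| := by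
    simp [Fin.sum_univ_four, Matrix.det_fin_three, Matrix.cons_val_zero, Matrix.cons_val_one, Matrix.head_cons]
    ring_nf
  have e2 : (∑ i : Fin 4, ∑ j : Fin 4, if i < j then |y i * z j - y j * z i| else 0)
      = |y 0 * z 1 - y 1 * z 0| + |y 0 * z 2 - y 2 * z 0| + |y 0 * z 3 - y 3 * z 0| + |y 1 * z 2 - y 2 * z 1| + |y 1 * z 3 - y 3 * z 1| + |y 2 * z 3 - y 3 * z 2| := by
    simp [Fin.sum_univ_four]; ring
  have e3 : (∑ i : Fin 4, ∑ j : Fin 4, if i < j then |x i * z j - x j * z i| else 0)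
      = |x 0 * z 1 - x 1 * z 0| + |x 0 * z 2 - x 2 * z 0| + |x 0 * z 3 - x 3 * z 0| + |x 1 * z 2 - x 2 * z 1| + |x 1 * z 3 - x 3 * z 1| + |x 2 * z 3 - x 3 * z 2| := by
    simp [Fin.sum_univ_four]; ring
  rw [e1, e2, e3]
  exact core (x 0) (x 1) (x 2) (x 3) (y 0) (y 1) (y 2) (y 3) (z 0) (z 1) (z 2) (z 3)
    _ _ _ _ _ _ _ _ _ _ _ _ _ _ _ _ rfl rfl rfl rfl rfl rfl rfl rfl rfl rfl rfl rfl rfl rfl rfl rfl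
end

section
/- For any 3 vectors (x_i, y_i, z_i), i = 1, 2, 3, in ℝ³, one has |det[[x_1, x_2, x_3], [y_1, y_2, y_3], [z_1, z_2, z_3]]| · (|z_1| + |z_2| + |z_3|) ≤ (∑_{1 ≤ i < j ≤ 3} |y_i z_j - y_j z_i|) · (∑_{1 ≤ i < j ≤ 3} |x_i z_j - x_j z_i|). -/
theorem stmt_8 (x y z : Fin 3 → ℝ) :
    |Matrix.det !![x 0, x 1, x 2; y 0, y 1, y 2; z 0, z 1, z 2]|
      * (|z 0| + |z 1| + |z 2|)
    ≤ (|y 0 * z 1 - y 1 * z 0| + |y 0 * z 2 - y 2 * z 0| + |y 1 * z 2 - y 2 * z 1|)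
      * (|x 0 * z 1 - x 1 * z 0| + |x 0 * z 2 - x 2 * z 0| + |x 1 * z 2 - x 2 * z 1|) := by
  have hM : Matrix.det !![x 0, x 1, x 2; y 0, y 1, y 2; z 0, z 1, z 2]
      = x 0 * y 1 * z 2 - x 0 * y 2 * z 1 - x 1 * y 0 * z 2 + x 1 * y 2 * z 0
        + x 2 * y 0 * z 1 - x 2 * y 1 * z 0 := by
    simp [Matrix.det_fin_three]
  rw [hM]
  set d : ℝ := x 0 * y 1 * z 2 - x 0 * y 2 * z 1 - x 1 * y 0 * z 2 + x 1 * y 2 * z 0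
    + x 2 * y 0 * z 1 - x 2 * y 1 * z 0 with hd
  set A01 := y 0 * z 1 - y 1 * z 0
  set A02 := y 0 * z 2 - y 2 * z 0
  set A12 := y 1 * z 2 - y 2 * z 1
  set B01 := x 0 * z 1 - x 1 * z 0
  set B02 := x 0 * z 2 - x 2 * z 0
  set B12 := x 1 * z 2 - x 2 * z 1
  have h0 : |d| * |z 0| ≤ |A02| * |B01| + |A01| * |B02| := by
    rw [← abs_mul]
    have : d * z 0 = A02 * B01 - A01 * B02 := by simp only [hd]; ring
    rw [this]
    calc |A02 * B01 - A01 * B02| ≤ |A02 * B01| + |A01 * B02| := abs_sub _ _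
      _ = |A02| * |B01| + |A01| * |B02| := by rw [abs_mul, abs_mul]
  have h1 : |d| * |z 1| ≤ |A12| * |B01| + |A01| * |B12| := by
    rw [← abs_mul]
    have : d * z 1 = A12 * B01 - A01 * B12 := by simp only [hd]; ring
    rw [this]
    calc |A12 * B01 - A01 * B12| ≤ |A12 * B01| + |A01 * B12| := abs_sub _ _
      _ = |A12| * |B01| + |A01| * |B12| := by rw [abs_mul, abs_mul]
  have h2 : |d| * |z 2| ≤ |A12| * |B02| + |A02| * |B12| := by
    rw [← abs_mul]
    have : d * z 2 = A12 * B02 - A02 * B12 := by simp only [hd]; ring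
    rw [this]
    calc |A12 * B02 - A02 * B12| ≤ |A12 * B02| + |A02 * B12| := abs_sub _ _
      _ = |A12| * |B02| + |A02| * |B12| := by rw [abs_mul, abs_mul]
  nlinarith [abs_nonneg A01, abs_nonneg A02, abs_nonneg A12, abs_nonneg B01, abs_nonneg B02,
    abs_nonneg B12, mul_nonneg (abs_nonneg A01) (abs_nonneg B01),
    mul_nonneg (abs_nonneg A02) (abs_nonneg B02), mul_nonneg (abs_nonneg A12) (abs_nonneg B12)]
end

section
/- Let z_1, ..., z_m be nonzero real numbers and σ a permutation of {1, ..., m}, let R_σ = {x ∈ ℝ^m : x_{σ(1)}/z_{σ(1)} ≤ ... ≤ x_{σ(m)}/z_{σ(m)}}, and let G be the set of all x ∈ ℝ^m for which the multiset {x_1/z_1, ..., x_m/z_m} contains at most two distinct values. Then every x ∈ R_σ is a finite convex combination of points of G ∩ R_σ. -/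
theorem stmt_13 (m : ℕ) (z : Fin m → ℝ) (hz : ∀ i, z i ≠ 0) (σ : Equiv.Perm (Fin m)) :
    {x : Fin m → ℝ | ∀ i j : Fin m, i ≤ j → x (σ i) / z (σ i) ≤ x (σ j) / z (σ j)}
      ⊆ convexHull ℝ
        ({x : Fin m → ℝ | ∃ lam lam' : ℝ, ∀ i : Fin m, x i / z i = lam ∨ x i / z i = lam'}
          ∩ {x : Fin m → ℝ | ∀ i j : Fin m, i ≤ j →
              x (σ i) / z (σ i) ≤ x (σ j) / z (σ j)}) := by
  intro x hx
  rcases Nat.eq_zero_or_pos m with hm | hm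
  · subst hm
    exact subset_convexHull ℝ _ ⟨⟨0, 0, fun i => i.elim0⟩, hx⟩
  obtain ⟨N, rfl⟩ : ∃ N, m = N + 1 := ⟨m - 1, by omega⟩
  have hNlt : ∀ n : ℕ, min n N < N + 1 := fun n => by omega
  set T : ℕ → ℝ := fun n => x (σ ⟨min n N, hNlt n⟩) / z (σ ⟨min n N, hNlt n⟩) with hT
  have hTmono : Monotone T := by
    intro a b hab
    exact hx _ _ (by simp only [Fin.mk_le_mk]; omega)
  have hTk : ∀ k : Fin (N + 1), T k.val = x (σ k) / z (σ k) := by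
    intro k
    have hk : (⟨min k.val N, hNlt k.val⟩ : Fin (N + 1)) = k :=
      Fin.ext (by have := k.isLt; simp; omega)
    simp only [hT, hk]
  set w : ℕ → ℝ := fun n => if n = 0 then 1 else T n - T (n - 1) with hw
  set g : ℕ → (Fin (N + 1) → ℝ) := fun n i =>
    (if n = 0 then T 0 else if n ≤ (σ.symm i).val then 1 else 0) * z i with hg
  have hw0 : ∀ n, 0 ≤ w n := by
    intro n
    simp only [hw]
    split_ifs with h
    · norm_num
    · exact sub_nonneg.mpr (hTmono (Nat.sub_le n 1))
  set W : ℝ := ∑ n ∈ Finset.range (N + 1), w n with hWdef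
  have hW1 : 1 ≤ W := by
    have h0 : w 0 ≤ W :=
      Finset.single_le_sum (fun i _ => hw0 i) (Finset.mem_range.mpr (by omega))
    simpa [hw] using h0
  have hWpos : 0 < W := lt_of_lt_of_le one_pos hW1
  -- ratio computation for g n
  have hgr : ∀ n (i : Fin (N + 1)),
      g n i / z i = (if n = 0 then T 0 else if n ≤ (σ.symm i).val then 1 else 0) := by
    intro n i
    simp only [hg]
    rw [mul_div_assoc, div_self (hz i), mul_one]
  -- membership of the scaled points
  have hgS : ∀ n ∈ Finset.range (N + 1), (W • g n) ∈
      ({x : Fin (N+1) → ℝ | ∃ lam lam' : ℝ, ∀ i : Fin (N+1), x i / z i = lam ∨ x i / z i = lam'}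
        ∩ {x : Fin (N+1) → ℝ | ∀ i j : Fin (N+1), i ≤ j →
            x (σ i) / z (σ i) ≤ x (σ j) / z (σ j)}) := by
    intro n _
    have hrat : ∀ i : Fin (N + 1), (W • g n) i / z i
        = W * (if n = 0 then T 0 else if n ≤ (σ.symm i).val then 1 else 0) := by
      intro i
      have := hgr n i
      rw [Pi.smul_apply, smul_eq_mul, mul_div_assoc, this]
    constructor
    · -- at most two ratio values
      rcases eq_or_ne n 0 with h0 | h0
      · refine ⟨W * T 0, W * T 0, fun i => Or.inl ?_⟩
        rw [hrat i, if_pos h0]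
      · refine ⟨W * 1, W * 0, fun i => ?_⟩
        rw [hrat i, if_neg h0]
        split_ifs with h
        · exact Or.inl rfl
        · exact Or.inr rfl
    · -- sorted ratios
      intro i j hij
      rw [hrat (σ i), hrat (σ j)]
      simp only [Equiv.symm_apply_apply]
      rcases eq_or_ne n 0 with h0 | h0
      · simp [h0]
      · rw [if_neg h0, if_neg h0]
        have hij' : i.val ≤ j.val := hij
        split_ifs with h1 h2 h2
        · exact le_refl _
        · exact absurd (h1.trans hij') h2
        · nlinarith
        · exact le_refl _
  -- the sum identity
  have hsum : ∑ n ∈ Finset.range (N + 1), w n • g n = x := by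
    funext i
    rw [Finset.sum_apply]
    set j : ℕ := (σ.symm i).val with hj
    have hjN : j ≤ N := Nat.lt_succ_iff.mp (σ.symm i).isLt
    have hterm : ∀ n, (w n • g n) i
        = (if n = 0 then T 0 else
            (if n ≤ j then T n - T (n - 1) else 0)) * z i := by
      intro n
      rw [Pi.smul_apply, smul_eq_mul]
      simp only [hg, hw]
      split_ifs with h0 h1 <;> ring
    calc ∑ n ∈ Finset.range (N + 1), (w n • g n) i
        = ∑ n ∈ Finset.range (N + 1),
            (if n = 0 then T 0 else (if n ≤ j then T n - T (n - 1) else 0)) * z i := by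
          exact Finset.sum_congr rfl fun n _ => hterm n
      _ = (∑ n ∈ Finset.range (N + 1),
            (if n = 0 then T 0 else (if n ≤ j then T n - T (n - 1) else 0))) * z i := by
          rw [Finset.sum_mul]
      _ = x i := by
          rw [Finset.sum_range_succ']
          have hsucc : ∀ n, (if n + 1 = 0 then T 0 else
              (if n + 1 ≤ j then T (n + 1) - T (n + 1 - 1) else 0))
              = (if n < j then T (n + 1) - T n else 0) := by
            intro n
            rw [if_neg (Nat.succ_ne_zero n), Nat.add_sub_cancel]
            exact if_congr (by omega) rfl rfl
          simp only [hsucc]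
          norm_num
          have h1 : ∑ n ∈ Finset.range N, (if n < j then T (n + 1) - T n else 0)
              = ∑ n ∈ Finset.range j, (T (n + 1) - T n) := by
            rw [← Finset.sum_subset (Finset.range_subset_range.mpr hjN)
              (fun n _ hn => if_neg (by simpa using hn))]
            exact Finset.sum_congr rfl fun n hn => if_pos (Finset.mem_range.mp hn)
          have hTji : T j = x i / z i := by
            have := hTk (σ.symm i)
            rwa [Equiv.apply_symm_apply] at this
          rw [h1, Finset.sum_range_sub T j,
            show T j - T 0 + T 0 = T j by ring, hTji, div_mul_cancel₀ _ (hz i)]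
  have hx' : x = Finset.centerMass (Finset.range (N + 1)) w (fun n => W • g n) := by
    rw [Finset.centerMass]
    have : ∑ n ∈ Finset.range (N + 1), w n • (W • g n)
        = W • ∑ n ∈ Finset.range (N + 1), w n • g n := by
      rw [Finset.smul_sum]
      exact Finset.sum_congr rfl fun n _ => smul_comm _ _ _
    rw [this, hsum, ← hWdef, smul_smul, inv_mul_cancel₀ (ne_of_gt hWpos), one_smul]
  rw [hx']
  exact Finset.centerMass_mem_convexHull _ (fun n _ => hw0 n) (by rw [← hWdef]; exact hWpos)
    (fun n hn => hgS n hn)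
end

section
/- Let λ, λ', μ, μ' ∈ ℝ and s_1, s_2, s_3, s_4 ≥ 0, and set A = s_1·[0, (λ, μ, 1)] + s_2·[0, (λ, μ', 1)] + s_3·[0, (λ', μ, 1)] + s_4·[0, (λ', μ', 1)] (a Minkowski sum of four segments in ℝ³), B = [0, e_1], C = [0, e_2]. If s_1·s_4 = s_2·s_3, then V(A,A,A)·V(A,B,C) = (3/2)·V(A,A,B)·V(A,A,C), i.e., equality holds in the zonoid Bezout inequality V(A,A,A)·V(A,B,C) ≤ (3/2)·V(A,A,B)·V(A,A,C); in particular the constant 3/2 cannot be improved. -/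
/-!
The mixed volume of three segments is `V([0,u], [0,v], [0,w]) = |det(u,v,w)| / 6`. Indeed, the
volume `|det(u,v,w)|` of the parallelepiped `[0,u] + [0,v] + [0,w]` expands by multilinearity into
mixed volumes of the three segments; applied to `(u,u,u)`, `(u,u,v)` and `(u,v,v)`, where the
determinant vanishes, the expansion shows that every term with a repeated segment is zero, leaving
`6 V([0,u], [0,v], [0,w])`.

By multilinearity every mixed volume of `A`, `B`, `C` is then a sum of such determinants over the
corners `(λ_a, μ_b, 1)`. Three distinct corners give `|λ - λ'| |μ - μ'|`, two corners together with
`e₁` (resp. `e₂`) give `|μ - μ'|` (resp. `|λ - λ'|`) when their `μ` (resp. `λ`) differ, so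
`V(A,A,A) = |λ - λ'| |μ - μ'| e₃(s)`, `V(A,B,C) = e₁(s) / 6`,
`V(A,A,B) = |μ - μ'| (s₁ + s₃)(s₂ + s₄) / 3` and `V(A,A,C) = |λ - λ'| (s₁ + s₂)(s₃ + s₄) / 3`.
The claim reduces to `e₁(s) e₃(s) - (s₁ + s₂)(s₃ + s₄)(s₁ + s₃)(s₂ + s₄) = -(s₁ s₄ - s₂ s₃)²`.
-/

open MeasureTheory

/-- The segment joining the origin to `v`, as a convex body in `ℝ³`. -/
noncomputable def segCB (v : Fin 3 → ℝ) : ConvexBody (Fin 3 → ℝ) :=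
  ⟨segment ℝ 0 v, convex_segment 0 v,
    by rw [← convexHull_pair (𝕜 := ℝ)]; exact (Set.toFinite {0, v}).isCompact_convexHull (𝕜 := ℝ),
    ⟨0, left_mem_segment ℝ 0 v⟩⟩

open scoped Pointwise

theorem volume_sum_segment {ι : Type*} [Fintype ι] [DecidableEq ι] (v : ι → ι → ℝ) :
    volume (∑ i, segment ℝ 0 (v i)) = ENNReal.ofReal |(Matrix.of v).det| := by
  rw [← parallelepiped_eq_sum_segment, ← addHaarMeasure_eq_volume_pi,
    ← Module.Basis.parallelepiped_basisFun, ← Module.Basis.addHaar_def,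
    Measure.addHaar_parallelepiped, Pi.basisFun_det_apply]

theorem volume_segCB_add_segCB_add_segCB (u v w : Fin 3 → ℝ) :
    (volume ((segCB u + segCB v + segCB w : ConvexBody (Fin 3 → ℝ)) : Set (Fin 3 → ℝ))).toReal =
      |(Matrix.of ![u, v, w]).det| := by
  have h := volume_sum_segment ![u, v, w]
  simp only [Fin.sum_univ_three, Matrix.cons_val_zero, Matrix.cons_val_one, Matrix.cons_val_two,
    Matrix.tail_cons, Matrix.head_cons] at h
  rw [ConvexBody.coe_add, ConvexBody.coe_add]
  exact (congrArg ENNReal.toReal h).trans (ENNReal.toReal_ofReal (abs_nonneg _))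

structure IsMixedVolume
    (V : ConvexBody (Fin 3 → ℝ) → ConvexBody (Fin 3 → ℝ) → ConvexBody (Fin 3 → ℝ) → ℝ) : Prop where
  symm12 : ∀ K L M, V K L M = V L K M
  symm23 : ∀ K L M, V K L M = V K M L
  add_left : ∀ K L M N, V (K + L) M N = V K M N + V L M N
  smul_left : ∀ (c : ℝ) K M N, 0 ≤ c → V (c • K) M N = c * V K M N
  self_eq_volume : ∀ K, V K K K = (volume (K : Set (Fin 3 → ℝ))).toReal

namespace IsMixedVolume

variable {V : ConvexBody (Fin 3 → ℝ) → ConvexBody (Fin 3 → ℝ) → ConvexBody (Fin 3 → ℝ) → ℝ}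

theorem symm13 (hV : IsMixedVolume V) (K L M : ConvexBody (Fin 3 → ℝ)) : V K L M = V M L K := by
  rw [hV.symm12, hV.symm23, hV.symm12]

theorem add_mid (hV : IsMixedVolume V) (K L M N : ConvexBody (Fin 3 → ℝ)) :
    V M (K + L) N = V M K N + V M L N := by
  rw [hV.symm12, hV.add_left, hV.symm12 K, hV.symm12 L]

theorem add_right (hV : IsMixedVolume V) (K L M N : ConvexBody (Fin 3 → ℝ)) :
    V M N (K + L) = V M N K + V M N L := by
  rw [hV.symm13, hV.add_left, hV.symm13 K, hV.symm13 L]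

theorem zero_left (hV : IsMixedVolume V) (M N : ConvexBody (Fin 3 → ℝ)) : V 0 M N = 0 := by
  simpa using hV.add_left 0 0 M N

noncomputable def addMonoidHomLeft (hV : IsMixedVolume V) (M N : ConvexBody (Fin 3 → ℝ)) :
    ConvexBody (Fin 3 → ℝ) →+ ℝ where
  toFun K := V K M N
  map_zero' := hV.zero_left M N
  map_add' K L := hV.add_left K L M N

theorem sum_smul_left (hV : IsMixedVolume V) {ι : Type*} [Fintype ι] (s : ι → ℝ) (hs : ∀ i, 0 ≤ s i)
    (K : ι → ConvexBody (Fin 3 → ℝ)) (M N : ConvexBody (Fin 3 → ℝ)) :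
    V (∑ i, s i • K i) M N = ∑ i, s i * V (K i) M N := by
  have h := map_sum (hV.addMonoidHomLeft M N) (fun i ↦ s i • K i) Finset.univ
  simp only [addMonoidHomLeft, AddMonoidHom.coe_mk, ZeroHom.coe_mk] at h
  rw [h]
  exact Finset.sum_congr rfl fun i _ ↦ hV.smul_left _ _ _ _ (hs i)

theorem sum_smul_mid (hV : IsMixedVolume V) {ι : Type*} [Fintype ι] (s : ι → ℝ) (hs : ∀ i, 0 ≤ s i)
    (K : ι → ConvexBody (Fin 3 → ℝ)) (M N : ConvexBody (Fin 3 → ℝ)) :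
    V M (∑ i, s i • K i) N = ∑ i, s i * V M (K i) N := by
  simp only [hV.symm12 M, hV.sum_smul_left s hs]

theorem sum_smul_right (hV : IsMixedVolume V) {ι : Type*} [Fintype ι] (s : ι → ℝ) (hs : ∀ i, 0 ≤ s i)
    (K : ι → ConvexBody (Fin 3 → ℝ)) (M N : ConvexBody (Fin 3 → ℝ)) :
    V M N (∑ i, s i • K i) = ∑ i, s i * V M N (K i) := by
  simp only [hV.symm13 M, hV.sum_smul_left s hs]

theorem add_add_cube (hV : IsMixedVolume V) (K L M : ConvexBody (Fin 3 → ℝ)) :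
    V (K + L + M) (K + L + M) (K + L + M) = V K K K + V L L L + V M M M
      + 3 * (V K K L + V K K M + V K L L + V L L M + V K M M + V L M M) + 6 * V K L M := by
  simp only [hV.add_left, hV.add_mid, hV.add_right]
  grind [hV.symm12, hV.symm23]

theorem segCB_segCB_segCB (hV : IsMixedVolume V) (u v w : Fin 3 → ℝ) :
    V (segCB u) (segCB v) (segCB w) = |(Matrix.of ![u, v, w]).det| / 6 := by
  have expand : ∀ a b c : Fin 3 → ℝ, _ = |(Matrix.of ![a, b, c]).det| := fun a b c ↦ by
    rw [← volume_segCB_add_segCB_add_segCB, ← hV.self_eq_volume, hV.add_add_cube]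
  have det_rep_left (a b : Fin 3 → ℝ) : (Matrix.of ![a, a, b]).det = 0 :=
    Matrix.det_zero_of_row_eq (i := 0) (j := 1) (by decide) rfl
  have det_rep_right (a b : Fin 3 → ℝ) : (Matrix.of ![a, b, b]).det = 0 :=
    Matrix.det_zero_of_row_eq (i := 1) (j := 2) (by decide) rfl
  have diag (a : Fin 3 → ℝ) : V (segCB a) (segCB a) (segCB a) = 0 := by
    have h := expand a a a
    rw [det_rep_left, abs_zero] at h
    linarith
  have repeated (a b : Fin 3 → ℝ) :
      V (segCB a) (segCB a) (segCB b) = 0 ∧ V (segCB a) (segCB b) (segCB b) = 0 := by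
    have h₁ := expand a a b
    have h₂ := expand a b b
    rw [det_rep_left, abs_zero, diag, diag] at h₁
    rw [det_rep_right, abs_zero, diag, diag] at h₂
    constructor <;> linarith
  linarith [expand u v w, diag u, diag v, diag w, (repeated u v).1, (repeated u v).2, (repeated u w).1, (repeated u w).2,
    (repeated v w).1, (repeated v w).2]

end IsMixedVolume

def corner (x y : Fin 2 → ℝ) (p : Fin 2 × Fin 2) : Fin 3 → ℝ := ![x p.1, y p.2, 1]

theorem abs_det_corner_corner_corner (x y : Fin 2 → ℝ) (p q r : Fin 2 × Fin 2) :
    |(Matrix.of ![corner x y p, corner x y q, corner x y r]).det|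
      = if p ≠ q ∧ q ≠ r ∧ p ≠ r then |x 0 - x 1| * |y 0 - y 1| else 0 := by
  obtain ⟨a, b⟩ := p
  obtain ⟨c, d⟩ := q
  obtain ⟨e, f⟩ := r
  fin_cases a <;> fin_cases b <;> fin_cases c <;> fin_cases d <;> fin_cases e <;> fin_cases f <;>
    simp [corner, Matrix.det_fin_three] <;>
    first | ring1 | (rw [← abs_mul, abs_eq_abs]; first | (left; ring1) | (right; ring1))

theorem abs_det_corner_corner_e1 (x y : Fin 2 → ℝ) (p q : Fin 2 × Fin 2) :
    |(Matrix.of ![corner x y p, corner x y q, ![1, 0, 0]]).det|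
      = if p.2 ≠ q.2 then |y 0 - y 1| else 0 := by
  obtain ⟨a, b⟩ := p
  obtain ⟨c, d⟩ := q
  fin_cases b <;> fin_cases d <;> simp [corner, Matrix.det_fin_three, abs_sub_comm]

theorem abs_det_corner_corner_e2 (x y : Fin 2 → ℝ) (p q : Fin 2 × Fin 2) :
    |(Matrix.of ![corner x y p, corner x y q, ![0, 1, 0]]).det|
      = if p.1 ≠ q.1 then |x 0 - x 1| else 0 := by
  obtain ⟨a, b⟩ := p
  obtain ⟨c, d⟩ := q
  fin_cases a <;> fin_cases c <;> simp [corner, Matrix.det_fin_three, neg_add_eq_sub, abs_sub_comm]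

theorem abs_det_corner_e1_e2 (x y : Fin 2 → ℝ) (p : Fin 2 × Fin 2) :
    |(Matrix.of ![corner x y p, ![1, 0, 0], ![0, 1, 0]]).det| = 1 := by
  simp [corner, Matrix.det_fin_three]

noncomputable def rectZonotope (s : Fin 2 × Fin 2 → ℝ) (x y : Fin 2 → ℝ) :
    ConvexBody (Fin 3 → ℝ) :=
  ∑ p, s p • segCB (corner x y p)

namespace IsMixedVolume

variable {V : ConvexBody (Fin 3 → ℝ) → ConvexBody (Fin 3 → ℝ) → ConvexBody (Fin 3 → ℝ) → ℝ}
  {s : Fin 2 × Fin 2 → ℝ} (x y : Fin 2 → ℝ)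

theorem rectZonotope_self (hV : IsMixedVolume V) (hs : ∀ p, 0 ≤ s p) :
    V (rectZonotope s x y) (rectZonotope s x y) (rectZonotope s x y)
      = |x 0 - x 1| * |y 0 - y 1| * (s (0, 0) * s (0, 1) * s (1, 0) + s (0, 0) * s (0, 1) * s (1, 1)
          + s (0, 0) * s (1, 0) * s (1, 1) + s (0, 1) * s (1, 0) * s (1, 1)) := by
  simp only [rectZonotope, hV.sum_smul_left s hs, hV.sum_smul_mid s hs, hV.sum_smul_right s hs,
    hV.segCB_segCB_segCB, abs_det_corner_corner_corner]
  simp [Fintype.sum_prod_type]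
  ring

theorem rectZonotope_rectZonotope_e1 (hV : IsMixedVolume V) (hs : ∀ p, 0 ≤ s p) :
    V (rectZonotope s x y) (rectZonotope s x y) (segCB ![1, 0, 0])
      = |y 0 - y 1| * ((s (0, 0) + s (1, 0)) * (s (0, 1) + s (1, 1))) / 3 := by
  simp only [rectZonotope, hV.sum_smul_left s hs, hV.sum_smul_mid s hs, hV.segCB_segCB_segCB,
    abs_det_corner_corner_e1]
  simp [Fintype.sum_prod_type]
  ring

theorem rectZonotope_rectZonotope_e2 (hV : IsMixedVolume V) (hs : ∀ p, 0 ≤ s p) :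
    V (rectZonotope s x y) (rectZonotope s x y) (segCB ![0, 1, 0])
      = |x 0 - x 1| * ((s (0, 0) + s (0, 1)) * (s (1, 0) + s (1, 1))) / 3 := by
  simp only [rectZonotope, hV.sum_smul_left s hs, hV.sum_smul_mid s hs, hV.segCB_segCB_segCB,
    abs_det_corner_corner_e2]
  simp [Fintype.sum_prod_type]
  ring

theorem rectZonotope_e1_e2 (hV : IsMixedVolume V) (hs : ∀ p, 0 ≤ s p) :
    V (rectZonotope s x y) (segCB ![1, 0, 0]) (segCB ![0, 1, 0])
      = (s (0, 0) + s (0, 1) + s (1, 0) + s (1, 1)) / 6 := by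
  simp only [rectZonotope, hV.sum_smul_left s hs, hV.segCB_segCB_segCB, abs_det_corner_e1_e2]
  simp [Fintype.sum_prod_type]
  ring

end IsMixedVolume

theorem stmt_15
    (V : ConvexBody (Fin 3 → ℝ) → ConvexBody (Fin 3 → ℝ) → ConvexBody (Fin 3 → ℝ) → ℝ)
    (hsymm12 : ∀ K L M, V K L M = V L K M)
    (hsymm23 : ∀ K L M, V K L M = V K M L)
    (hadd : ∀ K L M N, V (K + L) M N = V K M N + V L M N)
    (hsmul : ∀ (c : ℝ) K M N, 0 ≤ c → V (c • K) M N = c * V K M N)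
    (hvol : ∀ K, V K K K = (volume (K : Set (Fin 3 → ℝ))).toReal)
    (lam lam' mu mu' s1 s2 s3 s4 : ℝ)
    (hs1 : 0 ≤ s1) (hs2 : 0 ≤ s2) (hs3 : 0 ≤ s3) (hs4 : 0 ≤ s4)
    (hdeg : s1 * s4 = s2 * s3)
    (A : ConvexBody (Fin 3 → ℝ))
    (hA : A = s1 • segCB ![lam, mu, 1] + s2 • segCB ![lam, mu', 1]
        + s3 • segCB ![lam', mu, 1] + s4 • segCB ![lam', mu', 1])
    (B C : ConvexBody (Fin 3 → ℝ))
    (hB : B = segCB ![1, 0, 0]) (hC : C = segCB ![0, 1, 0]) :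
    V A A A * V A B C = (3 / 2) * (V A A B * V A A C) := by
  have hV : IsMixedVolume V := ⟨hsymm12, hsymm23, hadd, hsmul, hvol⟩
  set s : Fin 2 × Fin 2 → ℝ := fun p ↦ ![![s1, s2], ![s3, s4]] p.1 p.2
  have hs : ∀ p, 0 ≤ s p := by
    rintro ⟨a, b⟩
    fin_cases a <;> fin_cases b <;> assumption
  have hA' : A = rectZonotope s ![lam, lam'] ![mu, mu'] := by
    simp [hA, rectZonotope, Fintype.sum_prod_type, corner, s, add_assoc]
  subst hA' hB hC
  rw [hV.rectZonotope_self _ _ hs, hV.rectZonotope_rectZonotope_e1 _ _ hs,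
    hV.rectZonotope_rectZonotope_e2 _ _ hs, hV.rectZonotope_e1_e2 _ _ hs]
  simp only [s, Matrix.cons_val_zero, Matrix.cons_val_one]
  linear_combination (-(|lam - lam'| * |mu - mu'| / 6) * (s1 * s4 - s2 * s3)) * hdeg
end
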